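/- Let λ and μ be partitions. Then: (1) there exists a Littlewood–Richardson tableau of shape (λ+μ)/λ and type μ, where λ+μ = (λ_1+μ_1, λ_2+μ_2, ...); (2) there exists a Littlewood–Richardson tableau of shape (λ⊎μ)/λ and type μ, where λ⊎μ is the partition obtained by sorting the merged sequence (λ_1, μ_1, λ_2, μ_2, λ_3, μ_3, ...) into weakly decreasing order. -/
import Mathlib


/-- A partition: a weakly decreasing sequence `part 0 ≥ part 1 ≥ ⋯` of natural
numbers that is eventually zero.  `part i` is the `(i+1)`-st part `λ_{i+1}`
(so we use 0-based indexing throughout). -/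
structure Partition' where
  part : ℕ → ℕ
  antitone : ∀ ⦃i j : ℕ⦄, i ≤ j → part j ≤ part i
  eventually_zero : ∃ N, ∀ i, N ≤ i → part i = 0

/-- `ν` is a monomial constituent of `m_λ · m_μ`: there is a permutation `σ` of
the indices such that `ν` is the weakly decreasing rearrangement (witnessed by
the bijection `τ`) of the sequence `i ↦ λ_i + μ_{σ i}`. -/
def IsMonomialConstituent (l m n : Partition') : Prop :=
  ∃ σ τ : Equiv.Perm ℕ, ∀ i, n.part i = l.part (τ i) + m.part (σ (τ i))

/-- The cell in row `i`, column `j` (0-indexed) belongs to the skew diagram `ν/λ`. -/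
def InSkew (l n : Partition') (i j : ℕ) : Prop := l.part i ≤ j ∧ j < n.part i

/-- `T` is a Littlewood–Richardson tableau of shape `ν/λ` and type `μ`:
its entries (on the cells of `ν/λ`) are positive integers, weakly increasing
along rows and strictly increasing down columns; for each `k ≥ 0` the entry
`k+1` occurs exactly `μ_{k+1}` times; and its reverse reading word (rows top to
bottom, each row right to left) is a lattice permutation, i.e. in every prefix
(the cells in rows `< r` together with the cells of row `r` in columns `≥ c`)
the entry `k+1` occurs at least as often as the entry `k+2`. -/
def IsLRTableau (l n m : Partition') (T : ℕ → ℕ → ℕ) : Prop :=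
  (∀ i j, InSkew l n i j → 1 ≤ T i j) ∧
  (∀ i j j', InSkew l n i j → InSkew l n i j' → j ≤ j' → T i j ≤ T i j') ∧
  (∀ i i' j, InSkew l n i j → InSkew l n i' j → i < i' → T i j < T i' j) ∧
  (∀ k : ℕ, Set.ncard {p : ℕ × ℕ | InSkew l n p.1 p.2 ∧ T p.1 p.2 = k + 1} = m.part k) ∧
  (∀ r c k : ℕ,
    Set.ncard {p : ℕ × ℕ | InSkew l n p.1 p.2 ∧ (p.1 < r ∨ (p.1 = r ∧ c ≤ p.2)) ∧
        T p.1 p.2 = k + 2} ≤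
    Set.ncard {p : ℕ × ℕ | InSkew l n p.1 p.2 ∧ (p.1 < r ∨ (p.1 = r ∧ c ≤ p.2)) ∧
        T p.1 p.2 = k + 1})

namespace LRaux

noncomputable def conj (p : Partition') (j : ℕ) : ℕ := sInf {i | p.part i ≤ j}

lemma conj_le_iff (p : Partition') (i j : ℕ) : conj p j ≤ i ↔ p.part i ≤ j := by
  obtain ⟨N, hN⟩ := p.eventually_zero
  have hne : {i | p.part i ≤ j}.Nonempty := ⟨N, by simp [hN N le_rfl]⟩
  constructor
  · intro h
    exact le_trans (p.antitone h) (Nat.sInf_mem hne)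
  · intro h
    exact Nat.sInf_le h

lemma lt_conj_iff (p : Partition') (i j : ℕ) : i < conj p j ↔ j < p.part i := by
  rw [← not_le, ← not_le, conj_le_iff]

lemma conj_antitone (p : Partition') {j j' : ℕ} (h : j ≤ j') : conj p j' ≤ conj p j := by
  rw [conj_le_iff]
  exact le_trans ((conj_le_iff p _ j).1 le_rfl) h

lemma setIio (p : Partition') (j : ℕ) : {i | j < p.part i} = Set.Iio (conj p j) := by
  ext i; simp [lt_conj_iff]

lemma ncard_Iio (n : ℕ) : (Set.Iio n).ncard = n := by
  rw [← Finset.coe_Iio, Set.ncard_coe_finset, Nat.card_Iio]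

lemma inSkew_iff (l n : Partition') (i j : ℕ) :
    InSkew l n i j ↔ conj l j ≤ i ∧ i < conj n j := by
  rw [InSkew, conj_le_iff, lt_conj_iff]

lemma skew_finite (l n : Partition') : {p : ℕ × ℕ | InSkew l n p.1 p.2}.Finite := by
  obtain ⟨N, hN⟩ := n.eventually_zero
  apply Set.Finite.subset (Set.finite_Iio N |>.prod (Set.finite_Iio (n.part 0)))
  rintro ⟨i, j⟩ ⟨h1, h2⟩
  constructor
  · simp only [Set.mem_Iio]
    by_contra h
    push_neg at h
    rw [hN i h] at h2; omega
  · exact lt_of_lt_of_le h2 (n.antitone (Nat.zero_le i))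

lemma conj_union (l m nUnion : Partition') (τ : Equiv.Perm ℕ)
    (hτ : ∀ i, nUnion.part i = if (τ i) % 2 = 0 then l.part ((τ i) / 2)
      else m.part ((τ i) / 2)) (j : ℕ) :
    conj nUnion j = conj l j + conj m j := by
  set merged : ℕ → ℕ := fun i => if i % 2 = 0 then l.part (i / 2) else m.part (i / 2) with hm
  have hMsplit : {i | j < merged i}
      = (fun i => 2 * i) '' Set.Iio (conj l j) ∪ (fun i => 2 * i + 1) '' Set.Iio (conj m j) := by
    ext i
    simp only [Set.mem_setOf_eq, Set.mem_union, Set.mem_image, Set.mem_Iio, hm]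
    rcases Nat.even_or_odd i with ⟨t, ht⟩ | ⟨t, ht⟩
    · have h0 : i % 2 = 0 := by omega
      have h1 : i / 2 = t := by omega
      simp only [h0, if_pos rfl, h1]
      constructor
      · intro h
        exact Or.inl ⟨t, (lt_conj_iff l t j).2 h, by omega⟩
      · rintro (⟨x, hx, hxe⟩ | ⟨x, hx, hxe⟩)
        · have : x = t := by omega
          subst this
          exact (lt_conj_iff _ _ _).1 hx
        · omega
    · have h0 : ¬ (i % 2 = 0) := by omega
      have h1 : i / 2 = t := by omega
      simp only [h0, if_neg h0, h1]
      constructor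
      · intro h
        exact Or.inr ⟨t, (lt_conj_iff m t j).2 h, by omega⟩
      · rintro (⟨x, hx, hxe⟩ | ⟨x, hx, hxe⟩)
        · omega
        · have : x = t := by omega
          subst this
          exact (lt_conj_iff _ _ _).1 hx
  have hperm : {i | j < nUnion.part i} = ⇑τ.symm '' {i | j < merged i} := by
    ext i
    simp only [Set.mem_setOf_eq, Set.mem_image, hτ]
    constructor
    · intro h
      exact ⟨τ i, h, τ.symm_apply_apply i⟩
    · rintro ⟨x, hx, rfl⟩
      rwa [τ.apply_symm_apply]
  have h2inj : Function.Injective (fun i : ℕ => 2 * i) := fun a b h => by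
    dsimp only at h; omega
  have h2inj' : Function.Injective (fun i : ℕ => 2 * i + 1) := fun a b h => by
    dsimp only at h; omega
  have hdisj : Disjoint ((fun i : ℕ => 2 * i) '' Set.Iio (conj l j))
      ((fun i : ℕ => 2 * i + 1) '' Set.Iio (conj m j)) := by
    rw [Set.disjoint_left]
    rintro a ⟨x, _, hx⟩ ⟨y, _, hy⟩
    dsimp only at hx hy
    omega
  calc conj nUnion j = (Set.Iio (conj nUnion j)).ncard := (ncard_Iio _).symm
    _ = {i | j < nUnion.part i}.ncard := by rw [setIio]
    _ = {i | j < merged i}.ncard := by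
        rw [hperm, Set.ncard_image_of_injective _ τ.symm.injective]
    _ = conj l j + conj m j := by
        rw [hMsplit, Set.ncard_union_eq hdisj ((Set.finite_Iio _).image _)
          ((Set.finite_Iio _).image _), Set.ncard_image_of_injective _ h2inj,
          Set.ncard_image_of_injective _ h2inj', ncard_Iio, ncard_Iio]

end LRaux

open LRaux in
/-- There are Littlewood–Richardson tableaux of shape `(λ+μ)/λ` and of shape
`(λ⊎μ)/λ`, both of type `μ`, where `λ+μ` is the componentwise sum and `λ⊎μ`
is the weakly decreasing rearrangement of the merged parts of `λ` and `μ`. -/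
theorem lr_sum_and_union (l m nSum nUnion : Partition')
    (hSum : ∀ i, nSum.part i = l.part i + m.part i)
    (hUnion : ∃ τ : Equiv.Perm ℕ, ∀ i,
      nUnion.part i = if (τ i) % 2 = 0 then l.part ((τ i) / 2) else m.part ((τ i) / 2)) :
    (∃ T : ℕ → ℕ → ℕ, IsLRTableau l nSum m T) ∧
    (∃ T : ℕ → ℕ → ℕ, IsLRTableau l nUnion m T) := by
  constructor
  · -- sum shape: fill row i with entry i + 1
    refine ⟨fun i _ => i + 1, fun i _ _ => Nat.le_add_left 1 i, fun _ _ _ _ _ _ => le_rfl,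
      fun i i' j _ _ h => Nat.add_lt_add_right h 1, ?_, ?_⟩
    · intro k
      have hset : {p : ℕ × ℕ | InSkew l nSum p.1 p.2 ∧ p.1 + 1 = k + 1}
          = (fun j => (k, j)) '' Set.Ico (l.part k) (l.part k + m.part k) := by
        ext ⟨i, j⟩
        constructor
        · rintro ⟨⟨h1, h2⟩, h3⟩
          simp only at h1 h2 h3
          have hi : i = k := by omega
          subst hi
          rw [hSum] at h2
          exact ⟨j, ⟨h1, h2⟩, rfl⟩
        · rintro ⟨j', ⟨h1, h2⟩, heq⟩
          simp only [Prod.mk.injEq] at heq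
          obtain ⟨rfl, rfl⟩ := heq
          refine ⟨⟨h1, ?_⟩, rfl⟩
          show j' < nSum.part k
          rw [hSum]; omega
      rw [hset, Set.ncard_image_of_injective _ (fun a b h => by simpa using h),
        ← Finset.coe_Ico, Set.ncard_coe_finset, Nat.card_Ico]
      omega
    · intro r c k
      have hmono : l.part (k + 1) ≤ l.part k := l.antitone (Nat.le_succ k)
      have hmmono : m.part (k + 1) ≤ m.part k := m.antitone (Nat.le_succ k)
      refine Set.ncard_le_ncard_of_injOn (fun p => (k, p.2 + l.part k - l.part (k + 1))) ?_ ?_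
        (Set.Finite.subset (skew_finite l nSum) fun p hp => hp.1)
      · rintro ⟨i, j⟩ ⟨⟨h1, h2⟩, hpre, hT⟩
        simp only at h1 h2 hpre hT
        rw [hSum] at h2
        have hi : i = k + 1 := by omega
        subst hi
        have hr : k < r := by rcases hpre with h | ⟨h, _⟩ <;> omega
        refine ⟨⟨?_, ?_⟩, Or.inl ?_, rfl⟩
        · show l.part k ≤ j + l.part k - l.part (k + 1); omega
        · show j + l.part k - l.part (k + 1) < nSum.part k
          rw [hSum]; omega
        · exact hr
      · rintro ⟨i, j⟩ ⟨_, _, hT⟩ ⟨i', j'⟩ ⟨_, _, hT'⟩ heq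
        simp only at hT hT'
        simp only [Prod.mk.injEq] at heq ⊢
        omega
  · -- union shape: entry = position within column
    obtain ⟨τ, hτ⟩ := hUnion
    have hcu : ∀ j, conj nUnion j = conj l j + conj m j := conj_union l m nUnion τ hτ
    refine ⟨fun i j => i - conj l j + 1, fun i j _ => Nat.le_add_left 1 _, ?_, ?_, ?_, ?_⟩
    · -- rows weakly increasing
      intro i j j' _ _ hjj'
      have := conj_antitone l hjj'
      show i - conj l j + 1 ≤ i - conj l j' + 1
      omega
    · -- columns strictly increasing
      intro i i' j hij hij' hii'
      rw [inSkew_iff] at hij hij'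
      show i - conj l j + 1 < i' - conj l j + 1
      omega
    · -- content
      intro k
      have hset : {p : ℕ × ℕ | InSkew l nUnion p.1 p.2 ∧ p.1 - conj l p.2 + 1 = k + 1}
          = (fun j => (conj l j + k, j)) '' Set.Iio (m.part k) := by
        ext ⟨i, j⟩
        constructor
        · rintro ⟨hsk, hT⟩
          simp only at hsk hT
          rw [inSkew_iff] at hsk
          obtain ⟨h1, h2⟩ := hsk
          have hi : i = conj l j + k := by omega
          refine ⟨j, ?_, by simp only [Prod.mk.injEq]; exact ⟨hi.symm, trivial⟩⟩
          simp only [Set.mem_Iio]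
          rw [← lt_conj_iff]
          rw [hcu] at h2
          omega
        · rintro ⟨j', hj', heq⟩
          simp only [Set.mem_Iio] at hj'
          simp only [Prod.mk.injEq] at heq
          obtain ⟨hi, rfl⟩ := heq
          have hcm : k < conj m j' := (lt_conj_iff m k j').2 hj'
          constructor
          · show InSkew l nUnion i j'
            rw [inSkew_iff, hcu]
            omega
          · show i - conj l j' + 1 = k + 1
            omega
      rw [hset, Set.ncard_image_of_injective _ (fun a b h => by
          simpa using ((Prod.mk.injEq _ _ _ _).mp h).2),
        ncard_Iio]
    · -- lattice condition
      intro r c k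
      refine Set.ncard_le_ncard_of_injOn (fun p => (p.1 - 1, p.2)) ?_ ?_
        (Set.Finite.subset (skew_finite l nUnion) fun p hp => hp.1)
      · rintro ⟨i, j⟩ ⟨hsk, hpre, hT⟩
        simp only at hsk hpre hT
        rw [inSkew_iff] at hsk
        obtain ⟨h1, h2⟩ := hsk
        have hi : i = conj l j + k + 1 := by omega
        refine ⟨?_, ?_, ?_⟩
        · show InSkew l nUnion (i - 1) j
          rw [inSkew_iff]
          omega
        · show i - 1 < r ∨ (i - 1 = r ∧ c ≤ j)
          rcases hpre with h | ⟨h, _⟩ <;> exact Or.inl (by omega)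
        · show i - 1 - conj l j + 1 = k + 1
          omega
      · rintro ⟨i, j⟩ ⟨hsk, _, hT⟩ ⟨i', j'⟩ ⟨hsk', _, hT'⟩ heq
        simp only at hT hT'
        rw [inSkew_iff] at hsk hsk'
        simp only [Prod.mk.injEq] at heq ⊢
        obtain ⟨h1, h2⟩ := heq
        subst h2
        refine ⟨?_, rfl⟩
        obtain ⟨ha, _⟩ := hsk
        obtain ⟨hb, _⟩ := hsk'
        omega
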